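/- arXiv:2112.01679 — 4 statements merged into one kernel-verified Lean document; each statement's English description precedes it below -/
import Mathlib

section
/- Let μ, α be real numbers with μ > −4α. Then the equilibrium (0, 0) of the autonomous planar system x' = y, y' = −α sin x − μ sin(2x)/(7 + cos 2x) is Lyapunov stable: for every r > 0 there exists δ > 0 such that every solution (x, y) : ℝ → ℝ² of the system with x(0)² + y(0)² < δ² satisfies x(τ)² + y(τ)² < r² for all τ ∈ ℝ. -/
/-!
The mechanical energy `y²/2 + W x`, with potential `W x = -α cos x - (μ/2) log (7 + cos 2x)`, is
conserved along solutions. Since `W'(0) = 0` and `W''(0) = α + μ/4 > 0`, the potential has a strict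
local minimum at `0`, hence so has the energy at the origin of the phase plane. A solution starting
with energy below the minimum of the energy on a small circle around the origin can never reach
that circle, which is Lyapunov stability.
-/

open Real

/-- `(x, y)` is a solution of the autonomous charged-pendulum system
`x' = y`, `y' = -α sin x - μ sin 2x / (7 + cos 2x)`. -/
def IsChargedPendulumSol (μ α : ℝ) (x y : ℝ → ℝ) : Prop :=
  Differentiable ℝ x ∧ Differentiable ℝ y ∧
  (∀ τ, deriv x τ = y τ) ∧
  (∀ τ, deriv y τ = - α * Real.sin (x τ)
      - μ * Real.sin (2 * x τ) / (7 + Real.cos (2 * x τ)))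

open Filter Topology Metric Set

theorem exists_dist_lt_of_conserved_of_eventually_lt {X : Type*} [PseudoMetricSpace X]
    [ProperSpace X] {V : X → ℝ} {a : X} (hV : Continuous V) (hmin : ∀ᶠ p in 𝓝[≠] a, V a < V p)
    {r : ℝ} (hr : 0 < r) :
    ∃ δ > 0, ∀ γ : ℝ → X, Continuous γ → (∀ t, V (γ t) = V (γ 0)) →
      dist (γ 0) a < δ → ∀ t, dist (γ t) a < r := by
  obtain ⟨ε, hε, hε_min⟩ := Metric.eventually_nhds_iff.mp (eventually_nhdsWithin_iff.mp hmin)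
  set ρ := min r (ε / 2)
  have hρ : 0 < ρ := lt_min hr (half_pos hε)
  obtain ⟨m, hm, hm_le⟩ : ∃ m, V a < m ∧ ∀ p ∈ sphere a ρ, m ≤ V p :=
    (isCompact_sphere a ρ).exists_forall_le' hV.continuousOn fun p hp =>
      hε_min (by rw [mem_sphere.mp hp]; linarith [min_le_right r (ε / 2)])
        (ne_of_mem_sphere hp hρ.ne')
  obtain ⟨η, hη, hη_lt⟩ :=
    Metric.eventually_nhds_iff.mp (hV.continuousAt.eventually (gt_mem_nhds hm))
  refine ⟨min η ρ, lt_min hη hρ, fun γ hγ hV_γ h0 t => ?_⟩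
  by_contra! ht
  have hρ_mem : ρ ∈ uIcc (dist (γ 0) a) (dist (γ t) a) :=
    mem_uIcc.mpr (Or.inl ⟨(h0.trans_le (min_le_right η ρ)).le, (min_le_left r _).trans ht⟩)
  obtain ⟨s, -, hs⟩ :=
    intermediate_value_uIcc (hγ.dist continuous_const).continuousOn hρ_mem
  have hm_le_s := hm_le (γ s) (mem_sphere.mpr hs)
  rw [hV_γ s] at hm_le_s
  exact (hη_lt (h0.trans_le (min_le_left η ρ))).not_ge hm_le_s

theorem eventually_lt_of_hasDerivAt_of_deriv_pos {W W' : ℝ → ℝ} {a : ℝ}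
    (hW : ∀ x, HasDerivAt W (W' x) x) (h₁ : W' a = 0) (h₂ : 0 < deriv W' a) :
    ∀ᶠ x in 𝓝[≠] a, W a < W x := by
  obtain ⟨ε, hε, hsign⟩ :=
    Metric.eventually_nhds_iff_ball.mp (eventually_nhdsWithin_sign_eq_of_deriv_pos h₂ h₁)
  rw [Real.ball_eq_Ioo] at hsign
  have hWc : Continuous W := continuous_iff_continuousAt.mpr fun x => (hW x).continuousAt
  have hmono : StrictMonoOn W (Ico a (a + ε)) :=
    strictMonoOn_of_hasDerivWithinAt_pos (convex_Ico _ _) hWc.continuousOn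
      (fun x _ => (hW x).hasDerivWithinAt) fun x hx => by
        rw [interior_Ico] at hx
        rw [← sign_eq_one_iff, hsign x ⟨by linarith [hx.1], hx.2⟩, sign_eq_one_iff, sub_pos]
        exact hx.1
  have hanti : StrictAntiOn W (Ioc (a - ε) a) :=
    strictAntiOn_of_hasDerivWithinAt_neg (convex_Ioc _ _) hWc.continuousOn
      (fun x _ => (hW x).hasDerivWithinAt) fun x hx => by
        rw [interior_Ioc] at hx
        rw [← sign_eq_neg_one_iff, hsign x ⟨hx.1, by linarith [hx.2]⟩, sign_eq_neg_one_iff,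
          sub_neg]
        exact hx.2
  filter_upwards [nhdsWithin_le_nhds (Ioo_mem_nhds (sub_lt_self a hε) (lt_add_of_pos_right a hε)),
    self_mem_nhdsWithin] with x hx (hxa : x ≠ a)
  rcases hxa.lt_or_gt with hlt | hgt
  · exact hanti ⟨hx.1, hlt.le⟩ ⟨sub_lt_self a hε, le_rfl⟩ hlt
  · exact hmono ⟨le_rfl, lt_add_of_pos_right a hε⟩ ⟨hgt.le, hx.2⟩ hgt

/-- Phase-plane points live in `EuclideanSpace ℝ (Fin 2)` so that `‖!₂[x, y]‖ = √(x² + y²)`. -/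
noncomputable def mechanicalEnergy (W : ℝ → ℝ) (p : EuclideanSpace ℝ (Fin 2)) : ℝ :=
  p 1 ^ 2 / 2 + W (p 0)

section MechanicalEnergy

variable {W W' : ℝ → ℝ}

lemma continuous_mechanicalEnergy (hW : Continuous W) : Continuous (mechanicalEnergy W) := by
  unfold mechanicalEnergy; fun_prop

@[simp]
lemma mechanicalEnergy_zero : mechanicalEnergy W 0 = W 0 := by
  simp [mechanicalEnergy]

lemma eventually_mechanicalEnergy_lt (hmin : ∀ᶠ x in 𝓝[≠] 0, W 0 < W x) :
    ∀ᶠ p in 𝓝[≠] 0, mechanicalEnergy W 0 < mechanicalEnergy W p := by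
  have hfst : Tendsto (fun p : EuclideanSpace ℝ (Fin 2) => p 0) (𝓝 0) (𝓝 0) :=
    (show Continuous fun p : EuclideanSpace ℝ (Fin 2) => p 0 by fun_prop).tendsto' 0 0 rfl
  filter_upwards [nhdsWithin_le_nhds (hfst.eventually (eventually_nhdsWithin_iff.mp hmin)),
    self_mem_nhdsWithin] with p hp (hp0 : p ≠ 0)
  rw [mechanicalEnergy_zero]
  unfold mechanicalEnergy
  by_cases h0 : p 0 = 0
  · have h1 : p 1 ≠ 0 := fun h1 => hp0 (by ext i; fin_cases i <;> simp [h0, h1])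
    rw [h0, lt_add_iff_pos_left]
    positivity
  · linarith [hp h0, sq_nonneg (p 1)]

lemma mechanicalEnergy_eq_of_hasDerivAt (hW : ∀ x, HasDerivAt W (W' x) x) {x y : ℝ → ℝ}
    (hx : ∀ t, HasDerivAt x (y t) t) (hy : ∀ t, HasDerivAt y (-W' (x t)) t) (t : ℝ) :
    mechanicalEnergy W !₂[x t, y t] = mechanicalEnergy W !₂[x 0, y 0] := by
  have hcurve : (fun t => mechanicalEnergy W !₂[x t, y t]) = fun t => y t ^ 2 / 2 + W (x t) := by
    ext t; simp [mechanicalEnergy]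
  have hE : ∀ t, HasDerivAt (fun t => mechanicalEnergy W !₂[x t, y t]) 0 t := fun t => by
    rw [hcurve]
    refine ((((hy t).pow 2).div_const 2).add ((hW (x t)).comp t (hx t))).congr_deriv ?_
    push_cast; ring
  exact is_const_of_deriv_eq_zero (fun t => (hE t).differentiableAt) (fun t => (hE t).deriv) t 0

lemma dist_toLp_zero_lt_iff {a b r : ℝ} (hr : 0 ≤ r) :
    dist !₂[a, b] 0 < r ↔ a ^ 2 + b ^ 2 < r ^ 2 := by
  rw [dist_zero_right, ← sq_lt_sq₀ (norm_nonneg _) hr, EuclideanSpace.norm_sq_eq]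
  simp [Fin.sum_univ_two]

theorem exists_sq_add_sq_lt_of_potential_eventually_lt (hW : ∀ x, HasDerivAt W (W' x) x)
    (hmin : ∀ᶠ x in 𝓝[≠] 0, W 0 < W x) {r : ℝ} (hr : 0 < r) :
    ∃ δ > 0, ∀ x y : ℝ → ℝ, (∀ t, HasDerivAt x (y t) t) → (∀ t, HasDerivAt y (-W' (x t)) t) →
      x 0 ^ 2 + y 0 ^ 2 < δ ^ 2 → ∀ t, x t ^ 2 + y t ^ 2 < r ^ 2 := by
  have hWc : Continuous W := continuous_iff_continuousAt.mpr fun x => (hW x).continuousAt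
  obtain ⟨δ, hδ, hstable⟩ := exists_dist_lt_of_conserved_of_eventually_lt
    (continuous_mechanicalEnergy hWc) (eventually_mechanicalEnergy_lt hmin) hr
  refine ⟨δ, hδ, fun x y hx hy h0 t => ?_⟩
  have hγ : Continuous fun t => !₂[x t, y t] := by
    have hxc := continuous_iff_continuousAt.mpr fun t => (hx t).continuousAt
    have hyc := continuous_iff_continuousAt.mpr fun t => (hy t).continuousAt
    fun_prop
  rw [← dist_toLp_zero_lt_iff hr.le]
  exact hstable _ hγ (mechanicalEnergy_eq_of_hasDerivAt hW hx hy)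
    ((dist_toLp_zero_lt_iff hδ.le).mpr h0) t

end MechanicalEnergy

lemma seven_add_cos_pos (t : ℝ) : 0 < 7 + cos t := by linarith [neg_one_le_cos t]

noncomputable def chargedPendulumPotential (μ α x : ℝ) : ℝ :=
  -α * cos x - μ / 2 * log (7 + cos (2 * x))

section ChargedPendulum

variable (μ α : ℝ)

lemma hasDerivAt_chargedPendulumPotential (x : ℝ) :
    HasDerivAt (chargedPendulumPotential μ α)
      (α * sin x + μ * sin (2 * x) / (7 + cos (2 * x))) x := by
  have hcos2 : HasDerivAt (fun x => 7 + cos (2 * x)) (-sin (2 * x) * 2) x :=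
    (((hasDerivAt_id x).const_mul 2).cos.const_add 7).congr_deriv (by simp)
  refine (((hasDerivAt_cos x).const_mul (-α)).sub
    ((hcos2.log (seven_add_cos_pos _).ne').const_mul (μ / 2))).congr_deriv ?_
  field_simp
  ring

lemma hasDerivAt_chargedPendulumForce_zero :
    HasDerivAt (fun x => α * sin x + μ * sin (2 * x) / (7 + cos (2 * x))) (α + μ / 4) 0 := by
  have hsin2 : HasDerivAt (fun x => sin (2 * x)) (cos (2 * 0) * 2) 0 :=
    ((hasDerivAt_id 0).const_mul 2).sin.congr_deriv (by simp)
  have hcos2 : HasDerivAt (fun x => 7 + cos (2 * x)) (-sin (2 * 0) * 2) 0 :=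
    (((hasDerivAt_id 0).const_mul 2).cos.const_add 7).congr_deriv (by simp)
  refine (((hasDerivAt_sin 0).const_mul α).add
    ((hsin2.const_mul μ).div hcos2 (seven_add_cos_pos _).ne')).congr_deriv ?_
  norm_num
  ring

end ChargedPendulum

/-- For `μ > -4α`, the equilibrium `(0,0)` of the charged pendulum with fixed
support point is Lyapunov stable. -/
theorem chargedPendulum_P1_stable (μ α : ℝ) (h : μ > -4 * α) :
    ∀ r > 0, ∃ δ > 0, ∀ x y : ℝ → ℝ, IsChargedPendulumSol μ α x y →
      x 0 ^ 2 + y 0 ^ 2 < δ ^ 2 → ∀ τ : ℝ, x τ ^ 2 + y τ ^ 2 < r ^ 2 := by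
  intro r hr
  have hmin : ∀ᶠ x in 𝓝[≠] 0, chargedPendulumPotential μ α 0 < chargedPendulumPotential μ α x :=
    eventually_lt_of_hasDerivAt_of_deriv_pos (hasDerivAt_chargedPendulumPotential μ α)
      (by simp) (by rw [(hasDerivAt_chargedPendulumForce_zero μ α).deriv]; linarith)
  obtain ⟨δ, hδ, hstable⟩ :=
    exists_sq_add_sq_lt_of_potential_eventually_lt (hasDerivAt_chargedPendulumPotential μ α) hmin hr
  exact ⟨δ, hδ, fun x y ⟨hx_diff, hy_diff, hx, hy⟩ => hstable x y
    (fun t => hx t ▸ (hx_diff t).hasDerivAt)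
    (fun t => (hy_diff t).hasDerivAt.congr_deriv (by rw [hy]; ring))⟩
end

section
/- Let μ, α be real numbers with μ > 4α. Then the equilibrium (π, 0) of the autonomous planar system x' = y, y' = −α sin x − μ sin(2x)/(7 + cos 2x) is Lyapunov stable: for every r > 0 there exists δ > 0 such that every solution (x, y) : ℝ → ℝ² of the system with (x(0) − π)² + y(0)² < δ² satisfies (x(τ) − π)² + y(τ)² < r² for all τ ∈ ℝ. -/
/-!
Along a solution the energy `y² / 2 + G x`, with `G x = -α cos x - (μ / 2) log (7 + cos 2x)`,
is constant. Since `G' π = 0` and `G'' π = μ / 4 - α > 0`, the energy has a strict local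
minimum at the equilibrium `(π, 0)`, and a conserved quantity with a strict local minimum
confines nearby trajectories (Lagrange–Dirichlet).
-/

open Real

open Filter Topology Set Metric

theorem eventually_nhdsGT_lt_of_deriv_pos {f : ℝ → ℝ} {x₀ : ℝ} (hf : Continuous f)
    (h : ∀ᶠ x in 𝓝[>] x₀, 0 < deriv f x) : ∀ᶠ x in 𝓝[>] x₀, f x₀ < f x := by
  obtain ⟨b, hb, hsub⟩ := mem_nhdsGT_iff_exists_Ioo_subset.1 h
  have hmono : StrictMonoOn f (Icc x₀ b) :=
    strictMonoOn_of_deriv_pos (convex_Icc x₀ b) hf.continuousOn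
      (fun x hx => hsub (by rwa [interior_Icc] at hx))
  filter_upwards [Ioo_mem_nhdsGT hb] with x hx
  exact hmono (left_mem_Icc.2 hb.le) (Ioo_subset_Icc_self hx) hx.1

theorem eventually_nhdsLT_lt_of_deriv_neg {f : ℝ → ℝ} {x₀ : ℝ} (hf : Continuous f)
    (h : ∀ᶠ x in 𝓝[<] x₀, deriv f x < 0) : ∀ᶠ x in 𝓝[<] x₀, f x₀ < f x := by
  obtain ⟨a, ha, hsub⟩ := mem_nhdsLT_iff_exists_Ioo_subset.1 h
  have hanti : StrictAntiOn f (Icc a x₀) :=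
    strictAntiOn_of_deriv_neg (convex_Icc a x₀) hf.continuousOn
      (fun x hx => hsub (by rwa [interior_Icc] at hx))
  filter_upwards [Ioo_mem_nhdsLT ha] with x hx
  exact hanti (Ioo_subset_Icc_self hx) (right_mem_Icc.2 ha.le) hx.2

theorem eventually_nhdsNE_lt_of_deriv_deriv_pos {f : ℝ → ℝ} {x₀ : ℝ} (hf : Continuous f)
    (hd : deriv f x₀ = 0) (hdd : 0 < deriv (deriv f) x₀) : ∀ᶠ x in 𝓝[≠] x₀, f x₀ < f x := by
  have hsign : ∀ᶠ x in 𝓝[≠] x₀, SignType.sign (deriv f x) = SignType.sign (x - x₀) :=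
    nhdsWithin_le_nhds (eventually_nhdsWithin_sign_eq_of_deriv_pos hdd hd)
  rw [← nhdsLT_sup_nhdsGT, eventually_sup]
  exact ⟨eventually_nhdsLT_lt_of_deriv_neg hf (deriv_neg_left_of_sign_deriv hsign),
    eventually_nhdsGT_lt_of_deriv_pos hf (deriv_pos_right_of_sign_deriv hsign)⟩

/-- Lagrange–Dirichlet: a conserved quantity with a strict local minimum at `p` is bounded below
on a small sphere around `p` by more than its values near `p`, so a trajectory starting near `p`
never reaches that sphere. -/
theorem exists_forall_dist_lt_of_conserved {X : Type*} [MetricSpace X] [ProperSpace X]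
    {V : X → ℝ} {p : X} (hV : Continuous V) (hmin : ∀ᶠ q in 𝓝[≠] p, V p < V q)
    {ε : ℝ} (hε : 0 < ε) :
    ∃ δ > 0, ∀ γ : ℝ → X, Continuous γ → (∀ t, V (γ t) = V (γ 0)) →
      dist (γ 0) p < δ → ∀ t, dist (γ t) p < ε := by
  obtain ⟨ρ₀, hρ₀, hρ₀min⟩ := Metric.eventually_nhds_iff.1 (eventually_nhdsWithin_iff.1 hmin)
  set ρ := min ε (ρ₀ / 2)
  have hρ : 0 < ρ := lt_min hε (half_pos hρ₀)
  have hsphere : ∀ q ∈ sphere p ρ, V p < V q := fun q hq =>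
    hρ₀min (by rw [mem_sphere.1 hq]; exact (min_le_right _ _).trans_lt (half_lt_self hρ₀))
      (ne_of_mem_sphere hq hρ.ne')
  obtain ⟨m, hm, hmV⟩ := (isCompact_sphere p ρ).exists_forall_le' hV.continuousOn hsphere
  obtain ⟨δ, hδ, hδV⟩ := Metric.eventually_nhds_iff.1 (hV.continuousAt.eventually (gt_mem_nhds hm))
  refine ⟨min δ ρ, lt_min hδ hρ, fun γ hγ hcons h0 t => ?_⟩
  by_contra! ht
  obtain ⟨s, hs⟩ := intermediate_value_univ 0 t (hγ.dist continuous_const)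
    ⟨(h0.trans_le (min_le_right _ _)).le, (min_le_left _ _).trans ht⟩
  have := hmV (γ s) (mem_sphere.2 hs)
  have := hδV (h0.trans_le (min_le_left _ _))
  linarith [hcons s]

theorem EuclideanSpace.dist_toLp_lt_iff {a b c d r : ℝ} (hr : 0 < r) :
    dist !₂[a, b] !₂[c, d] < r ↔ (a - c) ^ 2 + (b - d) ^ 2 < r ^ 2 := by
  rw [EuclideanSpace.dist_eq, Real.sqrt_lt' hr]
  simp [Fin.sum_univ_two, Real.dist_eq, sq_abs]

namespace ChargedPendulum

variable (μ α : ℝ)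

noncomputable def potential (x : ℝ) : ℝ := -α * cos x - μ / 2 * log (7 + cos (2 * x))

noncomputable def potentialDeriv (x : ℝ) : ℝ := α * sin x + μ * sin (2 * x) / (7 + cos (2 * x))

/-- Phase space is `EuclideanSpace ℝ (Fin 2)`, with `q 0 = x` and `q 1 = y`, so that `dist` is
the Euclidean distance. -/
noncomputable def energy (q : EuclideanSpace ℝ (Fin 2)) : ℝ := q 1 ^ 2 / 2 + potential μ α (q 0)

theorem seven_add_cos_pos (z : ℝ) : 0 < 7 + cos z := by
  linarith [neg_one_le_cos z]

theorem hasDerivAt_cos_two_mul (x : ℝ) :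
    HasDerivAt (fun x => cos (2 * x)) (-(2 * sin (2 * x))) x := by
  simpa [mul_comm] using ((hasDerivAt_id x).const_mul 2).cos

theorem hasDerivAt_potential (x : ℝ) : HasDerivAt (potential μ α) (potentialDeriv μ α x) x := by
  have hlog := ((hasDerivAt_cos_two_mul x).const_add 7).log (seven_add_cos_pos _).ne'
  refine (((hasDerivAt_cos x).const_mul (-α)).sub (hlog.const_mul (μ / 2))).congr_deriv ?_
  rw [potentialDeriv]
  ring

theorem deriv_potential : deriv (potential μ α) = potentialDeriv μ α :=
  funext fun x => (hasDerivAt_potential μ α x).deriv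

theorem hasDerivAt_potentialDeriv_pi : HasDerivAt (potentialDeriv μ α) (μ / 4 - α) π := by
  have hsin2 : HasDerivAt (fun x => sin (2 * x)) (2 * cos (2 * π)) π := by
    simpa [mul_comm] using ((hasDerivAt_id π).const_mul 2).sin
  have h := ((hasDerivAt_sin π).const_mul α).add
    ((hsin2.const_mul μ).div ((hasDerivAt_cos_two_mul π).const_add 7) (seven_add_cos_pos _).ne')
  refine h.congr_deriv ?_
  rw [cos_pi, cos_two_pi, sin_two_pi]
  ring

theorem continuous_potential : Continuous (potential μ α) :=
  continuous_iff_continuousAt.2 fun x => (hasDerivAt_potential μ α x).continuousAt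

theorem eventually_potential_pi_lt (h : 4 * α < μ) :
    ∀ᶠ x in 𝓝[≠] π, potential μ α π < potential μ α x := by
  refine eventually_nhdsNE_lt_of_deriv_deriv_pos (continuous_potential μ α) ?_ ?_ <;>
    rw [deriv_potential]
  · simp [potentialDeriv]
  · rw [(hasDerivAt_potentialDeriv_pi μ α).deriv]; linarith

theorem continuous_energy : Continuous (energy μ α) := by
  have := continuous_potential μ α
  unfold energy
  fun_prop

theorem eventually_energy_equilibrium_lt (h : 4 * α < μ) :
    ∀ᶠ q in 𝓝[≠] !₂[π, 0], energy μ α !₂[π, 0] < energy μ α q := by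
  have hcoord : Tendsto (fun q : EuclideanSpace ℝ (Fin 2) => q 0) (𝓝 !₂[π, 0]) (𝓝 π) :=
    (PiLp.continuous_apply 2 _ 0).tendsto _
  have hx := hcoord.eventually (eventually_nhdsWithin_iff.1 (eventually_potential_pi_lt μ α h))
  filter_upwards [nhdsWithin_le_nhds hx, self_mem_nhdsWithin] with q hq hne
  have hp : energy μ α !₂[π, 0] = potential μ α π := by simp [energy]
  rw [hp, energy]
  by_cases h0 : q 0 = π
  · have : q 1 ≠ 0 := fun h1 => hne (by ext i; fin_cases i <;> simp [h0, h1])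
    rw [h0, lt_add_iff_pos_left]
    positivity
  · nlinarith [hq h0, sq_nonneg (q 1)]

variable {μ α} in
theorem _root_.IsChargedPendulumSol.energy_eq {x y : ℝ → ℝ} (hs : IsChargedPendulumSol μ α x y)
    (t : ℝ) : energy μ α !₂[x t, y t] = energy μ α !₂[x 0, y 0] := by
  obtain ⟨hx, hy, hx', hy'⟩ := hs
  have hE : ∀ t, HasDerivAt (fun t => y t ^ 2 / 2 + potential μ α (x t)) 0 t := by
    intro t
    have hyd : HasDerivAt y (-potentialDeriv μ α (x t)) t :=
      (hy t).hasDerivAt.congr_deriv (by rw [hy' t, potentialDeriv]; ring)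
    have hxd : HasDerivAt x (y t) t := hx' t ▸ (hx t).hasDerivAt
    refine (((hyd.pow 2).div_const 2).add
      ((hasDerivAt_potential μ α (x t)).comp t hxd)).congr_deriv ?_
    ring
  simpa [energy] using
    is_const_of_deriv_eq_zero (fun t => (hE t).differentiableAt) (fun t => (hE t).deriv) t 0

end ChargedPendulum

open ChargedPendulum in
/-- For `μ > 4α`, the equilibrium `(π, 0)` of the charged pendulum with fixed
support point is Lyapunov stable. -/
theorem chargedPendulum_P2_stable (μ α : ℝ) (h : μ > 4 * α) :
    ∀ r > 0, ∃ δ > 0, ∀ x y : ℝ → ℝ, IsChargedPendulumSol μ α x y →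
      (x 0 - Real.pi) ^ 2 + y 0 ^ 2 < δ ^ 2 →
      ∀ τ : ℝ, (x τ - Real.pi) ^ 2 + y τ ^ 2 < r ^ 2 := by
  intro r hr
  obtain ⟨δ, hδ, hstable⟩ :=
    exists_forall_dist_lt_of_conserved (continuous_energy μ α)
      (eventually_energy_equilibrium_lt μ α h) hr
  refine ⟨δ, hδ, fun x y hs h0 τ => ?_⟩
  have hγ : Continuous fun t => !₂[x t, y t] := by
    have := hs.1.continuous
    have := hs.2.1.continuous
    fun_prop
  have := hstable _ hγ hs.energy_eq (by rwa [EuclideanSpace.dist_toLp_lt_iff hδ, sub_zero]) τ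
  rwa [EuclideanSpace.dist_toLp_lt_iff hr, sub_zero] at this
end

section
/- (Krein–Gelfand–Lidskii, necessity direction.) Let n ≥ 1 and let σ₁, …, σₙ be real numbers such that σ_k + σ_l = N for some k, l ∈ {1, …, n} and some nonzero integer N. Let D be the 2n × 2n diagonal matrix diag(σ₁, …, σₙ, σ₁, …, σₙ) and let J be the standard 2n × 2n symplectic matrix (J = [[0, Iₙ], [−Iₙ, 0]]). Then for every ε₀ > 0 there exist ε with 0 < ε < ε₀ and a continuous, 2π-periodic, symmetric-matrix-valued function A : ℝ → M_{2n}(ℝ) such that the linear system z'(t) = J (D + ε A(t)) z(t) has a solution that is unbounded on ℝ. -/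
/-!
In complex coordinates `w_j = x_j + i y_j` the unperturbed system is `w_j' = -i σ_j w_j`, and the
perturbation `A(t)` below (the coupling matrix `S` of `k` and `l`, rotated with frequency `N`)
adds `-i ε e^{-iNt} S w̄`. Take the unperturbed mode `u` equal to `α e^{-iσ_j t}` on `{k, l}` and
`0` elsewhere. Since `σ_k + σ_l = N` the added term is in phase with `u`, and `α = e^{-iπ/4}`
(so that `α = -i ᾱ`) makes it exactly `ε u`, also when `k = l`: `J A(t) u(t) = u(t)`. Hence
`e^{εt} u(t)` solves the perturbed system and grows exponentially.
-/

open Real Matrix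

theorem hasDerivAt_exp_mul_smul_of_mulVec_eq_self {ι : Type*} [Fintype ι] {B P : Matrix ι ι ℝ}
    {u : ℝ → ι → ℝ} {t : ℝ} (hu : HasDerivAt u (B *ᵥ u t) t) (hP : P *ᵥ u t = u t) (ε : ℝ) :
    HasDerivAt (fun s => exp (ε * s) • u s) ((B + ε • P) *ᵥ (exp (ε * t) • u t)) t := by
  have he : HasDerivAt (fun s => exp (ε * s)) (exp (ε * t) * ε) t := by
    simpa using ((hasDerivAt_id t).const_mul ε).exp
  refine (he.smul hu).congr_deriv ?_
  rw [add_mulVec, mulVec_smul, mulVec_smul, smul_mulVec, hP]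
  module

theorem not_exists_forall_norm_exp_mul_smul_le {E : Type*} [SeminormedAddCommGroup E]
    [NormedSpace ℝ E] {u : ℝ → E} {c ε : ℝ} (hc : 0 < c) (hε : 0 < ε) (hu : ∀ t, c ≤ ‖u t‖) :
    ¬ ∃ M, ∀ t, ‖exp (ε * t) • u t‖ ≤ M := by
  rintro ⟨M, hM⟩
  set t := M / (ε * c)
  have hlt : M < ‖exp (ε * t) • u t‖ := calc
    M < (ε * t + 1) * c := by simp only [t]; field_simp; linarith
    _ ≤ exp (ε * t) * ‖u t‖ := mul_le_mul (add_one_le_exp _) (hu t) hc.le (exp_pos _).le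
    _ = ‖exp (ε * t) • u t‖ := by rw [norm_smul, norm_of_nonneg (exp_pos _).le]
  exact hlt.not_ge (hM t)

theorem fromBlocks_zero_one_neg_one_zero_mulVec {ι R : Type*} [Fintype ι] [DecidableEq ι]
    [Ring R] (v : ι ⊕ ι → R) :
    fromBlocks (0 : Matrix ι ι R) 1 (-1) 0 *ᵥ v =
      Sum.elim (fun i => v (.inr i)) (fun i => -v (.inl i)) := by
  ext (i | i) <;> simp [fromBlocks_mulVec, neg_mulVec]

theorem cos_and_sin_of_add_eq_add_pi_div_two {p q θ : ℝ} (h : p + q = θ + π / 2) :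
    -sin θ * cos q + cos θ * sin q = cos p ∧ cos θ * cos q + sin θ * sin q = sin p := by
  obtain rfl : θ = p + q - π / 2 := by linarith
  rw [sin_sub_pi_div_two, cos_sub_pi_div_two]
  constructor
  · rw [neg_neg, ← cos_sub, add_sub_cancel_right]
  · rw [neg_mul, ← sub_eq_add_neg, ← sin_sub, add_sub_cancel_right]

noncomputable section

variable {ι : Type*}

def couplingMatrix [DecidableEq ι] (k l : ι) : Matrix ι ι ℝ :=
  of fun i j => if (i = k ∧ j = l) ∨ (i = l ∧ j = k) then 1 else 0

theorem isSymm_couplingMatrix [DecidableEq ι] (k l : ι) : (couplingMatrix k l).IsSymm :=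
  IsSymm.ext fun _ _ => if_congr (by tauto) rfl rfl

theorem couplingMatrix_mulVec [Fintype ι] [DecidableEq ι] (k l : ι) (v : ι → ℝ) (i : ι) :
    (couplingMatrix k l *ᵥ v) i = if i = k then v l else if i = l then v k else 0 := by
  simp only [couplingMatrix, mulVec, dotProduct, of_apply, ite_mul, one_mul, zero_mul]
  by_cases hik : i = k <;> by_cases hil : i = l
  · subst hik hil; simp
  · subst hik; simp [hil]
  · subst hil; simp [hik]
  · simp [hik, hil]

def resonantPerturbation (S : Matrix ι ι ℝ) (N t : ℝ) : Matrix (ι ⊕ ι) (ι ⊕ ι) ℝ :=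
  fromBlocks (cos (N * t) • S) (-sin (N * t) • S) (-sin (N * t) • S) (-cos (N * t) • S)

theorem continuous_resonantPerturbation (S : Matrix ι ι ℝ) (N : ℝ) :
    Continuous (resonantPerturbation S N) := by
  unfold resonantPerturbation
  fun_prop

theorem isSymm_resonantPerturbation {S : Matrix ι ι ℝ} (hS : S.IsSymm) (N t : ℝ) :
    (resonantPerturbation S N t).IsSymm :=
  IsSymm.fromBlocks (hS.smul _) (by rw [transpose_smul, hS]) (hS.smul _)

theorem resonantPerturbation_add_two_pi (S : Matrix ι ι ℝ) (N : ℤ) (t : ℝ) :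
    resonantPerturbation S N (t + 2 * π) = resonantPerturbation S N t := by
  simp only [resonantPerturbation, mul_add, cos_add_int_mul_two_pi, sin_add_int_mul_two_pi]

def rotatingMode [DecidableEq ι] (σ : ι → ℝ) (s : Finset ι) (t : ℝ) : ι ⊕ ι → ℝ :=
  Sum.elim (fun j => if j ∈ s then cos (σ j * t + π / 4) else 0)
    (fun j => if j ∈ s then -sin (σ j * t + π / 4) else 0)

theorem hasDerivAt_rotatingMode [Fintype ι] [DecidableEq ι] (σ : ι → ℝ) (s : Finset ι) (t : ℝ) :
    HasDerivAt (rotatingMode σ s)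
      ((fromBlocks 0 1 (-1) 0 * diagonal (Sum.elim σ σ)) *ᵥ rotatingMode σ s t) t := by
  rw [← mulVec_mulVec, fromBlocks_zero_one_neg_one_zero_mulVec, hasDerivAt_pi]
  have hphase (j : ι) : HasDerivAt (fun t => σ j * t + π / 4) (σ j) t := by
    simpa using ((hasDerivAt_id t).const_mul (σ j)).add_const (π / 4)
  rintro (j | j) <;> by_cases hj : j ∈ s <;>
    simp only [rotatingMode, Sum.elim_inl, Sum.elim_inr, mulVec_diagonal, hj, if_true, if_false]
  · simpa [mul_comm] using (hphase j).cos
  · simpa using hasDerivAt_const t (0 : ℝ)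
  · exact (hphase j).sin.neg.congr_deriv (by ring)
  · simpa using hasDerivAt_const t (0 : ℝ)

theorem one_half_le_norm_rotatingMode [Fintype ι] [DecidableEq ι] (σ : ι → ℝ) {s : Finset ι}
    {k : ι} (hk : k ∈ s) (t : ℝ) : 1 / 2 ≤ ‖rotatingMode σ s t‖ := by
  have hx : |cos (σ k * t + π / 4)| ≤ ‖rotatingMode σ s t‖ := by
    simpa [rotatingMode, hk] using norm_le_pi_norm (rotatingMode σ s t) (.inl k)
  have hy : |sin (σ k * t + π / 4)| ≤ ‖rotatingMode σ s t‖ := by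
    simpa [rotatingMode, hk] using norm_le_pi_norm (rotatingMode σ s t) (.inr k)
  by_contra! h
  nlinarith [sin_sq_add_cos_sq (σ k * t + π / 4), sq_abs (sin (σ k * t + π / 4)),
    sq_abs (cos (σ k * t + π / 4)), abs_nonneg (sin (σ k * t + π / 4)),
    abs_nonneg (cos (σ k * t + π / 4))]

theorem symplectic_mul_resonantPerturbation_mulVec_rotatingMode [Fintype ι] [DecidableEq ι]
    {σ : ι → ℝ} {k l : ι} {N : ℝ} (h : σ k + σ l = N) (t : ℝ) :
    (fromBlocks 0 1 (-1) 0 * resonantPerturbation (couplingMatrix k l) N t) *ᵥ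
      rotatingMode σ {k, l} t = rotatingMode σ {k, l} t := by
  have hk := cos_and_sin_of_add_eq_add_pi_div_two (p := σ k * t + π / 4) (q := σ l * t + π / 4)
    (θ := N * t) (by rw [← h]; ring)
  have hl := cos_and_sin_of_add_eq_add_pi_div_two (p := σ l * t + π / 4) (q := σ k * t + π / 4)
    (θ := N * t) (by rw [← h]; ring)
  rw [← mulVec_mulVec, fromBlocks_zero_one_neg_one_zero_mulVec, resonantPerturbation,
    fromBlocks_mulVec]
  ext (i | i) <;>
    simp only [Sum.elim_inl, Sum.elim_inr, Pi.add_apply, smul_mulVec, Pi.smul_apply, smul_eq_mul,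
      couplingMatrix_mulVec, Function.comp_apply, rotatingMode]
  · rcases eq_or_ne i k with rfl | hik
    · simp only [↓reduceIte, Finset.mem_insert, Finset.mem_singleton, true_or, or_true]
      linarith [hk.1]
    · rcases eq_or_ne i l with rfl | hil
      · simp only [hik, ↓reduceIte, Finset.mem_insert, Finset.mem_singleton, true_or, or_true]
        linarith [hl.1]
      · simp [hik, hil]
  · rcases eq_or_ne i k with rfl | hik
    · simp only [↓reduceIte, Finset.mem_insert, Finset.mem_singleton, true_or, or_true]
      linarith [hk.2]
    · rcases eq_or_ne i l with rfl | hil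
      · simp only [hik, ↓reduceIte, Finset.mem_insert, Finset.mem_singleton, true_or, or_true]
        linarith [hl.2]
      · simp [hik, hil]

end

theorem krein_gelfand_lidskii_instability_general (n : ℕ) (σ : Fin n → ℝ)
    (hres : ∃ k l : Fin n, ∃ N : ℤ, N ≠ 0 ∧ σ k + σ l = (N : ℝ)) :
    ∀ ε₀ > (0 : ℝ), ∃ ε : ℝ, 0 < ε ∧ ε < ε₀ ∧
      ∃ A : ℝ → Matrix (Fin n ⊕ Fin n) (Fin n ⊕ Fin n) ℝ,
        Continuous A ∧
        (∀ t, (A t).IsSymm) ∧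
        (∀ t, A (t + 2 * Real.pi) = A t) ∧
        ∃ z : ℝ → (Fin n ⊕ Fin n → ℝ),
          (∀ t, HasDerivAt z
            (((Matrix.fromBlocks (0 : Matrix (Fin n) (Fin n) ℝ) 1 (-1) 0) *
              (Matrix.diagonal (Sum.elim σ σ) + ε • A t)).mulVec (z t)) t) ∧
          ¬ ∃ M : ℝ, ∀ t, ‖z t‖ ≤ M := by
  obtain ⟨k, l, N, -, hkl⟩ := hres
  intro ε₀ hε₀
  set ε := ε₀ / 2
  refine ⟨ε, half_pos hε₀, half_lt_self hε₀, resonantPerturbation (couplingMatrix k l) N,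
    continuous_resonantPerturbation _ _, isSymm_resonantPerturbation (isSymm_couplingMatrix k l) _,
    resonantPerturbation_add_two_pi _ _, fun t => exp (ε * t) • rotatingMode σ {k, l} t,
    fun t => ?_, ?_⟩
  · rw [mul_add, mul_smul_comm]
    exact hasDerivAt_exp_mul_smul_of_mulVec_eq_self (hasDerivAt_rotatingMode σ {k, l} t)
      (symplectic_mul_resonantPerturbation_mulVec_rotatingMode hkl t) ε
  · exact not_exists_forall_norm_exp_mul_smul_le one_half_pos (half_pos hε₀)
      (one_half_le_norm_rotatingMode σ (Finset.mem_insert_self k {l}))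

/-- Krein–Gelfand–Lidskii theorem, necessity direction: if some sum `σ_k + σ_l` equals a
nonzero integer `N`, then for arbitrarily small `ε > 0` there is a continuous, symmetric,
`2π`-periodic matrix perturbation `A(t)` such that the linear Hamiltonian system
`z' = J (D + ε A(t)) z` has a solution unbounded on `ℝ`, where
`D = diag(σ₁, …, σₙ, σ₁, …, σₙ)` and `J` is the standard symplectic matrix. -/
theorem krein_gelfand_lidskii_instability (n : ℕ) (hn : 1 ≤ n) (σ : Fin n → ℝ)
    (hres : ∃ k l : Fin n, ∃ N : ℤ, N ≠ 0 ∧ σ k + σ l = (N : ℝ)) :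
    ∀ ε₀ > (0 : ℝ), ∃ ε : ℝ, 0 < ε ∧ ε < ε₀ ∧
      ∃ A : ℝ → Matrix (Fin n ⊕ Fin n) (Fin n ⊕ Fin n) ℝ,
        Continuous A ∧
        (∀ t, (A t).IsSymm) ∧
        (∀ t, A (t + 2 * Real.pi) = A t) ∧
        ∃ z : ℝ → (Fin n ⊕ Fin n → ℝ),
          (∀ t, HasDerivAt z
            (((Matrix.fromBlocks (0 : Matrix (Fin n) (Fin n) ℝ) 1 (-1) 0) *
              (Matrix.diagonal (Sum.elim σ σ) + ε • A t)).mulVec (z t)) t) ∧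
          ¬ ∃ M : ℝ, ∀ t, ‖z t‖ ≤ M :=
  krein_gelfand_lidskii_instability_general n σ hres
end

section
/- Let μ, α be real numbers with α + μ/4 > 0, and set ω = √(α + μ/4). If 2ω is not a positive integer, then there exists ε₀ > 0 such that for every ε with |ε| < ε₀, every twice-differentiable solution ξ : ℝ → ℝ of the Hill equation ξ''(τ) + (α + μ/4 + ε cos τ) ξ(τ) = 0 is bounded on ℝ. -/
/-!
Write the Hill equation as the planar linear system `(ξ, ξ')' = A(t) (ξ, ξ')`, with `A` trace-free
and `2π`-periodic. Let `u`, `v` be the solutions starting at `(1, 0)` and `(0, 1)`. Every solution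
is `ξ(0) u + ξ'(0) v`, so the monodromy matrix `M = (u(2π) | v(2π))` has determinant the Wronskian
`1`, and Cayley–Hamilton gives `ξ(t + 2π) + ξ(t - 2π) = tr M · ξ(t)`. If `|tr M| < 2`, the form
`x² - tr M · x y + y²` is positive definite and takes the same value on every pair
`(ξ(t + 2πn), ξ(t + 2π(n + 1)))`, so `ξ` is bounded.

At `ε = 0` the solutions are explicit and `tr M = 2 cos 2πω`, which has modulus `< 2` exactly when
`2ω ∉ ℕ`. Grönwall's inequality moves `tr M` by `O(ε)`, so `|tr M| < 2` persists for small `|ε|`.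
Global solutions exist because Picard–Lindelöf steps of a fixed length, depending only on the
Lipschitz constant, can be glued indefinitely.
-/

open Set Real Function
open scoped NNReal Topology

section IntegralCurve

variable {E : Type*} [NormedAddCommGroup E] [NormedSpace ℝ E]
  {v : ℝ → E → E} {γ γ' f g : ℝ → E} {s s' : Set ℝ} {K : ℝ≥0} {a b c : ℝ}

lemma IsIntegralCurveOn.congr (hγ : IsIntegralCurveOn γ v s) (heq : EqOn γ' γ s) :
    IsIntegralCurveOn γ' v s := fun t ht => by
  rw [heq ht]
  exact (hγ t ht).congr heq (heq ht)

lemma IsIntegralCurveOn.union (hs : IsIntegralCurveOn γ v s) (hs' : IsIntegralCurveOn γ v s')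
    (hsc : IsClosed s) (hsc' : IsClosed s') : IsIntegralCurveOn γ v (s ∪ s') := by
  -- off a closed set the derivative condition within it holds vacuously
  have within {r : Set ℝ} (hr : IsIntegralCurveOn γ v r) (hrc : IsClosed r) (t : ℝ) :
      HasDerivWithinAt γ (v t (γ t)) r t := by
    by_cases ht : t ∈ r
    exacts [hr t ht, HasFDerivWithinAt.of_notMem_closure (by rwa [hrc.closure_eq])]
  exact fun t _ => (within hs hsc t).union (within hs' hsc' t)

lemma IsIntegralCurveOn.ite_Icc (hf : IsIntegralCurveOn f v (Icc a b))
    (hg : IsIntegralCurveOn g v (Icc b c)) (hfg : f b = g b) (hab : a ≤ b) (hbc : b ≤ c) :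
    IsIntegralCurveOn (fun t => if t ≤ b then f t else g t) v (Icc a c) := by
  rw [← Icc_union_Icc_eq_Icc hab hbc]
  refine (hf.congr fun t ht => if_pos ht.2).union (hg.congr fun t ht => ?_) isClosed_Icc
    isClosed_Icc
  rcases ht.1.eq_or_lt with rfl | hlt
  · simp [hfg]
  · simp [not_le.mpr hlt]

lemma IsIntegralCurve.eq_of_apply_eq (hv : ∀ t, LipschitzWith K (v t))
    (hγ : IsIntegralCurve γ v) (hγ' : IsIntegralCurve γ' v) {t₀ : ℝ} (h : γ t₀ = γ' t₀) :
    γ = γ' :=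
  ODE_solution_unique_univ (s := fun _ => univ) (fun t => (hv t).lipschitzOnWith)
    (fun t => ⟨hγ t, mem_univ _⟩) (fun t => ⟨hγ' t, mem_univ _⟩) h

lemma IsIntegralCurve.norm_le (hv : ∀ t, LipschitzWith K (v t)) (hv0 : ∀ t, v t 0 = 0)
    (hγ : IsIntegralCurve γ v) {t : ℝ} (ht : 0 ≤ t) : ‖γ t‖ ≤ ‖γ 0‖ * exp (K * t) := by
  have h0 := isIntegralCurve_const hv0
  simpa using dist_le_of_trajectories_ODE hv hγ.continuous.continuousOn
    (fun s _ => (hγ s).hasDerivWithinAt) h0.continuous.continuousOn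
    (fun s _ => (h0 s).hasDerivWithinAt) (le_of_eq (dist_zero_right _)) t ⟨ht, le_rfl⟩

lemma IsIntegralCurve.comp_add_period {T : ℝ} (hv : Periodic v T) (hγ : IsIntegralCurve γ v) :
    IsIntegralCurve (fun t => γ (t + T)) v := by
  simpa [comp_def, hv _] using hγ.comp_add T

variable [CompleteSpace E]

lemma exists_isIntegralCurveOn_Icc_sub_add (hv : ∀ t, LipschitzWith K (v t))
    (hvc : ∀ x, Continuous (v · x)) (hv0 : ∀ t, v t 0 = 0) {h : ℝ} (hh : 0 ≤ h)
    (hKh : 2 * K * h ≤ 1) (t₀ : ℝ) (x : E) :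
    ∃ γ, γ t₀ = x ∧ IsIntegralCurveOn γ v (Icc (t₀ - h) (t₀ + h)) := by
  have hpl : IsPicardLindelof v (tmin := t₀ - h) (tmax := t₀ + h)
      ⟨t₀, by linarith, by linarith⟩ x (‖x‖₊ + 1) 0 (K * (2 * ‖x‖₊ + 1)) K := by
    refine ⟨fun t _ => (hv t).lipschitzOnWith, fun y _ => (hvc y).continuousOn,
      fun t _ y hy => ?_, ?_⟩
    · have hy : ‖y‖ ≤ 2 * ‖x‖ + 1 := by
        have := norm_le_norm_add_norm_sub' y x
        rw [mem_closedBall_iff_norm] at hy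
        push_cast at hy
        linarith
      calc ‖v t y‖ = dist (v t y) (v t 0) := by rw [hv0, dist_zero_right]
        _ ≤ K * dist y 0 := (hv t).dist_le_mul y 0
        _ ≤ K * (2 * ‖x‖ + 1) := by rw [dist_zero_right]; gcongr
        _ = _ := by push_cast; ring
    · simp only [add_sub_cancel_left, sub_sub_cancel, max_self, NNReal.coe_mul, NNReal.coe_add,
        NNReal.coe_ofNat, coe_nnnorm, NNReal.coe_one, NNReal.coe_zero, sub_zero]
      nlinarith [norm_nonneg x]
  exact hpl.exists_eq_forall_mem_Icc_hasDerivWithinAt₀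

lemma IsIntegralCurveOn.exists_extend_Icc (hv : ∀ t, LipschitzWith K (v t))
    (hvc : ∀ x, Continuous (v · x)) (hv0 : ∀ t, v t 0 = 0) {h : ℝ} (hh : 0 ≤ h)
    (hKh : 2 * K * h ≤ 1) (hγ : IsIntegralCurveOn γ v (Icc a b)) (hab : a ≤ b) :
    ∃ γ', EqOn γ' γ (Icc a b) ∧ IsIntegralCurveOn γ' v (Icc (a - h) (b + h)) := by
  obtain ⟨f, hfa, hf⟩ := exists_isIntegralCurveOn_Icc_sub_add hv hvc hv0 hh hKh a (γ a)
  obtain ⟨g, hgb, hg⟩ := exists_isIntegralCurveOn_Icc_sub_add hv hvc hv0 hh hKh b (γ b)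
  have hγg := hγ.ite_Icc (hg.mono (Icc_subset_Icc_left (by linarith))) hgb.symm hab
    (by linarith)
  refine ⟨fun t => if t ≤ a then f t else if t ≤ b then γ t else g t, fun t ht => ?_,
    (hf.mono (Icc_subset_Icc_right (by linarith))).ite_Icc hγg (by simp [hfa, hab])
      (by linarith) (by linarith)⟩
  rcases ht.1.eq_or_lt with rfl | hlt
  · simp [hfa]
  · simp [not_le.mpr hlt, ht.2]

lemma exists_isIntegralCurveOn_Icc_neg_self (hv : ∀ t, LipschitzWith K (v t))
    (hvc : ∀ x, Continuous (v · x)) (hv0 : ∀ t, v t 0 = 0) (x : E) (T : ℝ) :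
    ∃ γ, γ 0 = x ∧ IsIntegralCurveOn γ v (Icc (-T) T) := by
  set h : ℝ := (2 * (K + 1))⁻¹
  have hpos : 0 < h := by positivity
  have hKh : 2 * K * h ≤ 1 := by
    rw [← div_eq_mul_inv, div_le_one (by positivity)]
    linarith
  have key (n : ℕ) : ∃ γ, γ 0 = x ∧ IsIntegralCurveOn γ v (Icc (-(n * h)) (n * h)) := by
    induction n with
    | zero =>
      obtain ⟨γ, hγ0, hγ⟩ := exists_isIntegralCurveOn_Icc_sub_add hv hvc hv0 hpos.le hKh 0 x
      exact ⟨γ, hγ0, hγ.mono (Icc_subset_Icc (by simp [hpos.le]) (by simp [hpos.le]))⟩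
    | succ n ih =>
      obtain ⟨γ, hγ0, hγ⟩ := ih
      have hnh : (0 : ℝ) ≤ n * h := by positivity
      obtain ⟨γ', hγ'γ, hγ'⟩ := hγ.exists_extend_Icc hv hvc hv0 hpos.le hKh (by linarith)
      refine ⟨γ', by rw [hγ'γ ⟨by linarith, hnh⟩, hγ0], ?_⟩
      convert hγ' using 2 <;> push_cast <;> ring
  obtain ⟨n, hn⟩ := exists_nat_ge (T / h)
  have hT : T ≤ n * h := by rwa [div_le_iff₀ hpos] at hn
  obtain ⟨γ, hγ0, hγ⟩ := key n
  exact ⟨γ, hγ0, hγ.mono (Icc_subset_Icc (by linarith) hT)⟩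

lemma exists_isIntegralCurve (hv : ∀ t, LipschitzWith K (v t))
    (hvc : ∀ x, Continuous (v · x)) (hv0 : ∀ t, v t 0 = 0) (x : E) :
    ∃ γ, γ 0 = x ∧ IsIntegralCurve γ v := by
  choose Γ hΓ0 hΓ using exists_isIntegralCurveOn_Icc_neg_self hv hvc hv0 x
  have hderiv {T t : ℝ} (ht : |t| < T) : HasDerivAt (Γ T) (v t (Γ T t)) t := by
    obtain ⟨h₁, h₂⟩ := abs_lt.mp ht
    exact (hΓ T t ⟨h₁.le, h₂.le⟩).hasDerivAt (Icc_mem_nhds h₁ h₂)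
  have agree {T T' t : ℝ} (hT : |t| < T) (hT' : |t| < T') : Γ T t = Γ T' t := by
    have hm : |t| < min T T' := lt_min hT hT'
    exact ODE_solution_unique_of_mem_Ioo (s := fun _ => univ) (fun s _ => (hv s).lipschitzOnWith)
      (abs_lt.mp (by simpa using (abs_nonneg t).trans_lt hm))
      (fun s hs => ⟨hderiv ((abs_lt.mpr hs).trans_le (min_le_left _ _)), mem_univ _⟩)
      (fun s hs => ⟨hderiv ((abs_lt.mpr hs).trans_le (min_le_right _ _)), mem_univ _⟩)
      ((hΓ0 T).trans (hΓ0 T').symm) (abs_lt.mp hm)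
  refine ⟨fun t => Γ (|t| + 1) t, hΓ0 _, fun t => ?_⟩
  have hnear : ∀ᶠ s in 𝓝 t, |s| < |t| + 1 :=
    continuous_abs.continuousAt.eventually_lt continuousAt_const (lt_add_one _)
  exact (hderiv (lt_add_one _)).congr_of_eventuallyEq
    (hnear.mono fun s hs => agree (lt_add_one _) hs)

end IntegralCurve

section Linear

variable {E : Type*} [NormedAddCommGroup E] [NormedSpace ℝ E] {A : ℝ → E →L[ℝ] E} {γ γ' : ℝ → E}

lemma IsIntegralCurve.add (hγ : IsIntegralCurve γ (A ·)) (hγ' : IsIntegralCurve γ' (A ·)) :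
    IsIntegralCurve (fun t => γ t + γ' t) (A ·) := fun t => by
  simpa only [map_add] using (hγ t).fun_add (hγ' t)

lemma IsIntegralCurve.const_smul (hγ : IsIntegralCurve γ (A ·)) (c : ℝ) :
    IsIntegralCurve (fun t => c • γ t) (A ·) := fun t => by
  simpa only [map_smul] using (hγ t).fun_const_smul c

end Linear

noncomputable def hillField (q : ℝ → ℝ) (t : ℝ) : ℝ × ℝ →L[ℝ] ℝ × ℝ :=
  (ContinuousLinearMap.snd ℝ ℝ ℝ).prod (-q t • ContinuousLinearMap.fst ℝ ℝ ℝ)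

section Hill

variable {q : ℝ → ℝ} {K : ℝ} {γ γ' : ℝ → ℝ × ℝ}

@[simp]
lemma hillField_apply (q : ℝ → ℝ) (t : ℝ) (p : ℝ × ℝ) : hillField q t p = (p.2, -q t * p.1) :=
  rfl

lemma lipschitzWith_hillField (hK : ∀ t, |q t| ≤ K) (t : ℝ) :
    LipschitzWith (max 1 K).toNNReal (hillField q t) := by
  refine (hillField q t).lipschitz.weaken ?_
  rw [← NNReal.coe_le_coe, coe_nnnorm, Real.coe_toNNReal _ (le_max_of_le_left zero_le_one)]
  refine ContinuousLinearMap.opNorm_le_bound _ (le_max_of_le_left zero_le_one) fun p => ?_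
  simp only [hillField_apply, Prod.norm_def, Real.norm_eq_abs, abs_mul, abs_neg]
  refine max_le ?_ (mul_le_mul ((hK t).trans (le_max_right _ _)) (le_max_left _ _)
    (abs_nonneg _) (by positivity))
  calc |p.2| ≤ max |p.1| |p.2| := le_max_right _ _
    _ ≤ _ := le_mul_of_one_le_left (by positivity) (le_max_left _ _)

lemma continuous_hillField_apply (hq : Continuous q) (p : ℝ × ℝ) :
    Continuous (hillField q · p) := by
  simp only [hillField_apply]
  fun_prop

lemma periodic_hillField {T : ℝ} (hq : Periodic q T) :
    Periodic (fun t => ⇑(hillField q t)) T :=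
  fun t => by simp only [hillField, hq t]

lemma exists_isIntegralCurve_hillField (hq : Continuous q) (hK : ∀ t, |q t| ≤ K) (x : ℝ × ℝ) :
    ∃ γ, γ 0 = x ∧ IsIntegralCurve γ (hillField q ·) :=
  exists_isIntegralCurve (lipschitzWith_hillField hK) (continuous_hillField_apply hq)
    (fun _ => map_zero _) x

lemma isIntegralCurve_hillField_of_deriv {ξ : ℝ → ℝ} (hξ : Differentiable ℝ ξ)
    (hξ' : Differentiable ℝ (deriv ξ)) (h : ∀ t, deriv (deriv ξ) t + q t * ξ t = 0) :
    IsIntegralCurve (fun t => (ξ t, deriv ξ t)) (hillField q ·) := fun t => by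
  show HasDerivAt _ (hillField q t (ξ t, deriv ξ t)) t
  rw [hillField_apply, show -q t * ξ t = deriv (deriv ξ) t by linarith [h t]]
  exact (hξ t).hasDerivAt.prodMk (hξ' t).hasDerivAt

lemma IsIntegralCurve.wronskian_hillField_eq (hγ : IsIntegralCurve γ (hillField q ·))
    (hγ' : IsIntegralCurve γ' (hillField q ·)) (t : ℝ) :
    (γ t).1 * (γ' t).2 - (γ t).2 * (γ' t).1 = (γ 0).1 * (γ' 0).2 - (γ 0).2 * (γ' 0).1 := by
  have hfst {δ : ℝ → ℝ × ℝ} (hδ : IsIntegralCurve δ (hillField q ·)) (t : ℝ) :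
      HasDerivAt (fun s => (δ s).1) (δ t).2 t := by
    simpa [comp_def] using hasFDerivAt_fst.comp_hasDerivAt t (hδ t)
  have hsnd {δ : ℝ → ℝ × ℝ} (hδ : IsIntegralCurve δ (hillField q ·)) (t : ℝ) :
      HasDerivAt (fun s => (δ s).2) (-q t * (δ t).1) t := by
    simpa [comp_def] using hasFDerivAt_snd.comp_hasDerivAt t (hδ t)
  have hW (t : ℝ) := ((hfst hγ t).mul (hsnd hγ' t)).sub ((hsnd hγ t).mul (hfst hγ' t))
  refine is_const_of_deriv_eq_zero (fun t => (hW t).differentiableAt) (fun t => ?_) t 0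
  rw [(hW t).deriv]
  ring

end Hill

section Recurrence

variable {c : ℝ} {g : ℤ → ℝ}

lemma sq_sub_mul_mul_add_sq_eq_of_add_add_sub_eq_mul
    (hg : ∀ n, g (n + 1) + g (n - 1) = c * g n) (n : ℤ) :
    g n ^ 2 - c * g n * g (n + 1) + g (n + 1) ^ 2 = g 0 ^ 2 - c * g 0 * g 1 + g 1 ^ 2 := by
  induction n using Int.induction_on with
  | zero => simp
  | succ n ih =>
    have h := hg (n + 1)
    rw [add_sub_cancel_right] at h
    linear_combination ih + (g (n + 1 + 1) - g n) * h
  | pred n ih =>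
    have h := hg (-n)
    rw [sub_add_cancel]
    linear_combination ih + (g (-n - 1) - g (-n + 1)) * h

lemma two_sub_abs_mul_sq_le_of_add_add_sub_eq_mul (hc : |c| < 2)
    (hg : ∀ n, g (n + 1) + g (n - 1) = c * g n) (n : ℤ) :
    (2 - |c|) * g n ^ 2 ≤ 4 * (g 0 ^ 2 + g 1 ^ 2) := by
  have hinv := sq_sub_mul_mul_add_sq_eq_of_add_add_sub_eq_mul hg n
  have hlow : (2 - |c|) * g n ^ 2 ≤ 2 * (g n ^ 2 - c * g n * g (n + 1) + g (n + 1) ^ 2) := by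
    rcases abs_cases c with ⟨hc', hc0⟩ | ⟨hc', hc0⟩ <;> rw [hc'] at hc ⊢
    · nlinarith [mul_nonneg hc0 (sq_nonneg (g n - g (n + 1))),
        mul_nonneg (sub_nonneg.mpr hc.le) (sq_nonneg (g (n + 1)))]
    · nlinarith [mul_nonneg (neg_nonneg.mpr hc0.le) (sq_nonneg (g n + g (n + 1))),
        mul_nonneg (sub_nonneg.mpr hc.le) (sq_nonneg (g (n + 1)))]
  have hup : |c * g 0 * g 1| ≤ g 0 ^ 2 + g 1 ^ 2 := by
    rw [abs_mul, abs_mul, ← sq_abs (g 0), ← sq_abs (g 1)]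
    nlinarith [sq_nonneg (|g 0| - |g 1|), mul_nonneg (abs_nonneg (g 0)) (abs_nonneg (g 1))]
  linarith [neg_abs_le (c * g 0 * g 1)]

end Recurrence

lemma exists_forall_abs_le_of_add_add_sub_eq_mul {f : ℝ → ℝ} (hf : Continuous f) {c T : ℝ}
    (hT : 0 < T) (hc : |c| < 2) (hrec : ∀ t, f (t + T) + f (t - T) = c * f t) :
    ∃ M, ∀ t, |f t| ≤ M := by
  obtain ⟨S, hS⟩ :=
    isCompact_Icc.exists_bound_of_continuousOn (hf.continuousOn (s := Icc 0 (2 * T)))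
  refine ⟨√(8 * S ^ 2 / (2 - |c|)), fun t => abs_le_sqrt ?_⟩
  obtain ⟨n, ⟨hn0, hnT⟩, -⟩ := existsUnique_zsmul_near_of_pos' hT t
  set r := t - n • T
  have key := two_sub_abs_mul_sq_le_of_add_add_sub_eq_mul (g := fun m : ℤ => f (r + m * T)) hc
    (fun m => by convert hrec (r + m * T) using 3 <;> push_cast <;> ring) n
  have hr : |f r| ≤ S := by simpa using hS r ⟨hn0, by linarith⟩
  have hrT : |f (r + T)| ≤ S := by simpa using hS (r + T) ⟨by linarith, by linarith⟩
  simp only [Int.cast_zero, zero_mul, add_zero, Int.cast_one, one_mul] at key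
  rw [show r + n * T = t by simp [r, zsmul_eq_mul]] at key
  rw [le_div_iff₀ (by linarith)]
  nlinarith [sq_abs (f r), sq_abs (f (r + T)), abs_nonneg (f r), abs_nonneg (f (r + T))]

section Floquet

variable {q : ℝ → ℝ} {K T : ℝ} {u v γ : ℝ → ℝ × ℝ}

lemma IsIntegralCurve.hillField_eq_smul_add_smul (hγ : IsIntegralCurve γ (hillField q ·))
    (hK : ∀ t, |q t| ≤ K) (hu : IsIntegralCurve u (hillField q ·))
    (hv : IsIntegralCurve v (hillField q ·)) (hu0 : u 0 = (1, 0)) (hv0 : v 0 = (0, 1))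
    (t : ℝ) : γ t = (γ 0).1 • u t + (γ 0).2 • v t :=
  congrFun (hγ.eq_of_apply_eq (lipschitzWith_hillField hK)
    ((hu.const_smul (γ 0).1).add (hv.const_smul (γ 0).2)) (t₀ := 0) (by simp [hu0, hv0])) t

lemma IsIntegralCurve.hillField_add_period_add_sub_period
    (hγ : IsIntegralCurve γ (hillField q ·)) (hK : ∀ t, |q t| ≤ K) (hqT : Periodic q T)
    (hu : IsIntegralCurve u (hillField q ·)) (hv : IsIntegralCurve v (hillField q ·))
    (hu0 : u 0 = (1, 0)) (hv0 : v 0 = (0, 1)) (t : ℝ) :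
    γ (t + T) + γ (t - T) = ((u T).1 + (v T).2) • γ t := by
  have hper := periodic_hillField hqT
  have hback := hγ.comp_add_period hper.neg
  have hdet := hu.wronskian_hillField_eq hv T
  have hγT := hγ.hillField_eq_smul_add_smul hK hu hv hu0 hv0 T
  have hγ0 := hback.hillField_eq_smul_add_smul hK hu hv hu0 hv0 T
  simp only [hu0, hv0, add_neg_cancel, zero_add] at hdet hγ0
  -- Cayley–Hamilton for the monodromy matrix `(u T | v T)`, whose determinant is the Wronskian
  have h0 : γ T + γ (-T) = ((u T).1 + (v T).2) • γ 0 := by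
    rw [hγT, hγ0]
    ext <;> simp only [Prod.fst_add, Prod.snd_add, Prod.smul_fst, Prod.smul_snd, smul_eq_mul,
      smul_add]
    · linear_combination (-(γ (-T)).1) * hdet
    · linear_combination (-(γ (-T)).2) * hdet
  have := ((hγ.comp_add_period hper).add hback).eq_of_apply_eq (lipschitzWith_hillField hK)
    (hγ.const_smul _) (t₀ := 0) (by simpa using h0)
  simpa [sub_eq_add_neg] using congrFun this t

lemma IsIntegralCurve.exists_forall_abs_fst_le_of_hillField
    (hγ : IsIntegralCurve γ (hillField q ·)) (hK : ∀ t, |q t| ≤ K) (hqT : Periodic q T)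
    (hT : 0 < T) (hu : IsIntegralCurve u (hillField q ·)) (hv : IsIntegralCurve v (hillField q ·))
    (hu0 : u 0 = (1, 0)) (hv0 : v 0 = (0, 1)) (htr : |(u T).1 + (v T).2| < 2) :
    ∃ M, ∀ t, |(γ t).1| ≤ M :=
  exists_forall_abs_le_of_add_add_sub_eq_mul hγ.continuous.fst hT htr fun t =>
    congrArg Prod.fst (hγ.hillField_add_period_add_sub_period hK hqT hu hv hu0 hv0 t)

end Floquet

lemma IsIntegralCurve.dist_le_of_hillField {q q₀ : ℝ → ℝ} {K δ : ℝ} {γ γ₀ : ℝ → ℝ × ℝ}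
    (hγ : IsIntegralCurve γ (hillField q ·)) (hγ₀ : IsIntegralCurve γ₀ (hillField q₀ ·))
    (hK : ∀ t, |q t| ≤ K) (hK₀ : ∀ t, |q₀ t| ≤ K) (hδ : ∀ t, |q t - q₀ t| ≤ δ)
    (h0 : γ 0 = γ₀ 0) {t : ℝ} (ht : 0 ≤ t) :
    dist (γ t) (γ₀ t) ≤ δ * ‖γ 0‖ * exp (2 * max 1 K * t) := by
  set L := max 1 K
  have hL1 : 1 ≤ L := le_max_left _ _
  have hL : (L.toNNReal : ℝ) = L := Real.coe_toNNReal _ (by linarith)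
  have hδ0 : 0 ≤ δ := (abs_nonneg _).trans (hδ 0)
  set η := δ * ‖γ 0‖ * exp (L * t)
  have hfield (s : ℝ) (hs : s ∈ Ico 0 t) :
      dist (hillField q s (γ s)) (hillField q₀ s (γ s)) ≤ η := by
    have hnorm := hγ.norm_le (lipschitzWith_hillField hK) (fun _ => map_zero _) hs.1
    rw [hL] at hnorm
    have hexp : exp (L * s) ≤ exp (L * t) := exp_le_exp.mpr (by nlinarith [hs.2])
    calc dist (hillField q s (γ s)) (hillField q₀ s (γ s)) = |q s - q₀ s| * |(γ s).1| := by
          simp only [hillField_apply, neg_mul, Prod.dist_eq, dist_self, dist_neg_neg,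
            Real.dist_eq, ← sub_mul, abs_mul, sup_eq_right]
          positivity
      _ ≤ δ * ‖γ s‖ := mul_le_mul (hδ s) (by simpa using norm_fst_le (γ s)) (abs_nonneg _) hδ0
      _ ≤ η := by
        simp only [η, mul_assoc]
        gcongr
        exact hnorm.trans (by gcongr)
  have := dist_le_of_approx_trajectories_ODE (lipschitzWith_hillField hK₀)
    hγ.continuous.continuousOn (fun s _ => (hγ s).hasDerivWithinAt) hfield
    hγ₀.continuous.continuousOn (fun s _ => (hγ₀ s).hasDerivWithinAt)
    (fun s _ => (dist_self _).le) (by rw [h0, dist_self]) t ⟨ht, le_rfl⟩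
  rw [hL, gronwallBound_of_K_ne_0 (by linarith)] at this
  refine this.trans ?_
  have hη : 0 ≤ η := by positivity
  calc 0 * exp (L * (t - 0)) + (η + 0) / L * (exp (L * (t - 0)) - 1)
      ≤ η * exp (L * t) := by
        have he : 1 ≤ exp (L * t) := one_le_exp (by positivity)
        rw [zero_mul, zero_add, add_zero, sub_zero]
        exact mul_le_mul (div_le_self hη hL1) (by linarith) (by linarith) hη
    _ = δ * ‖γ 0‖ * exp (2 * L * t) := by
        rw [mul_assoc, ← exp_add]
        ring_nf

lemma isIntegralCurve_hillField_cos {ω k : ℝ} (hω : ω ^ 2 = k) :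
    IsIntegralCurve (fun t => (cos (ω * t), -(ω * sin (ω * t)))) (hillField (fun _ => k) ·) :=
  fun t => by
    have hlin : HasDerivAt (ω * ·) ω t := by simpa using (hasDerivAt_id t).const_mul ω
    refine (hlin.cos.prodMk (hlin.sin.const_mul ω).fun_neg).congr_deriv ?_
    ext <;> simp only [← hω, hillField_apply, neg_mul, neg_inj] <;> ring

lemma isIntegralCurve_hillField_sin {ω k : ℝ} (hω : ω ^ 2 = k) (hω0 : ω ≠ 0) :
    IsIntegralCurve (fun t => (sin (ω * t) / ω, cos (ω * t))) (hillField (fun _ => k) ·) :=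
  fun t => by
    have hlin : HasDerivAt (ω * ·) ω t := by simpa using (hasDerivAt_id t).const_mul ω
    refine ((hlin.sin.div_const ω).prodMk hlin.cos).congr_deriv ?_
    ext <;> simp only [← hω, hillField_apply, neg_mul] <;> field_simp

lemma abs_mul_le_abs_of_abs_le_one {a b : ℝ} (hb : |b| ≤ 1) : |a * b| ≤ |a| := by
  rw [abs_mul]
  exact mul_le_of_le_one_right (abs_nonneg a) hb

lemma abs_fst_add_snd_sub_two_cos_le {k ε T : ℝ} {p : ℝ → ℝ} {u v : ℝ → ℝ × ℝ} (hk : 0 < k)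
    (hp : ∀ t, |p t| ≤ 1) (hε : |ε| ≤ 1) (hT : 0 ≤ T)
    (hu : IsIntegralCurve u (hillField (fun t => k + ε * p t) ·))
    (hv : IsIntegralCurve v (hillField (fun t => k + ε * p t) ·))
    (hu0 : u 0 = (1, 0)) (hv0 : v 0 = (0, 1)) :
    |(u T).1 + (v T).2 - 2 * cos (√k * T)| ≤ 2 * |ε| * exp (2 * (k + 1) * T) := by
  have hω : √k ^ 2 = k := sq_sqrt hk.le
  have hεp (t : ℝ) : |ε * p t| ≤ |ε| := abs_mul_le_abs_of_abs_le_one (hp t)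
  have hK (t : ℝ) : |k + ε * p t| ≤ k + 1 :=
    (abs_add_le _ _).trans (by rw [abs_of_pos hk]; linarith [hεp t])
  have hK₀ (t : ℝ) : |(fun _ => k) t| ≤ k + 1 := by rw [abs_of_pos hk]; linarith
  have hδ (t : ℝ) : |k + ε * p t - (fun _ => k) t| ≤ |ε| := by simpa using hεp t
  have hmax : max 1 (k + 1) = k + 1 := max_eq_right (by linarith)
  have hfst (x y : ℝ × ℝ) : |x.1 - y.1| ≤ dist x y := by
    rw [Prod.dist_eq, ← Real.dist_eq]
    exact le_max_left _ _
  have hsnd (x y : ℝ × ℝ) : |x.2 - y.2| ≤ dist x y := by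
    rw [Prod.dist_eq, ← Real.dist_eq]
    exact le_max_right _ _
  have du := hu.dist_le_of_hillField (isIntegralCurve_hillField_cos hω) hK hK₀ hδ
    (by simp [hu0]) hT
  have dv := hv.dist_le_of_hillField (isIntegralCurve_hillField_sin hω (sqrt_pos.mpr hk).ne')
    hK hK₀ hδ (by simp [hv0]) hT
  simp only [hu0, hv0, hmax, Prod.norm_def, norm_one, norm_zero, max_eq_left zero_le_one,
    max_eq_right zero_le_one, mul_one] at du dv
  calc |(u T).1 + (v T).2 - 2 * cos (√k * T)|
      = |((u T).1 - cos (√k * T)) + ((v T).2 - cos (√k * T))| := by ring_nf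
    _ ≤ |(u T).1 - cos (√k * T)| + |(v T).2 - cos (√k * T)| := abs_add_le _ _
    _ ≤ |ε| * exp (2 * (k + 1) * T) + |ε| * exp (2 * (k + 1) * T) :=
        add_le_add ((hfst _ _).trans du) ((hsnd _ _).trans dv)
    _ = 2 * |ε| * exp (2 * (k + 1) * T) := by ring

lemma exists_pos_forall_abs_fst_add_snd_lt_two {k T : ℝ} (hk : 0 < k) (hT : 0 ≤ T)
    (hcos : |cos (√k * T)| < 1) :
    ∃ ε₀ > 0, ∀ ε, |ε| < ε₀ → ∀ {p : ℝ → ℝ} {u v : ℝ → ℝ × ℝ}, (∀ t, |p t| ≤ 1) →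
      IsIntegralCurve u (hillField (fun t => k + ε * p t) ·) →
      IsIntegralCurve v (hillField (fun t => k + ε * p t) ·) →
      u 0 = (1, 0) → v 0 = (0, 1) → |(u T).1 + (v T).2| < 2 := by
  set C := 2 * exp (2 * (k + 1) * T)
  have hC : 0 < C := by positivity
  refine ⟨min 1 ((2 - 2 * |cos (√k * T)|) / C), lt_min one_pos (div_pos (by linarith) hC),
    fun ε hε p u v hp hu hv hu0 hv0 => ?_⟩
  have hεC : C * |ε| < 2 - 2 * |cos (√k * T)| := by
    rw [mul_comm, ← lt_div_iff₀ hC]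
    exact hε.trans_le (min_le_right _ _)
  have hclose := abs_fst_add_snd_sub_two_cos_le hk hp (hε.le.trans (min_le_left _ _)) hT hu hv
    hu0 hv0
  have habs := abs_sub_abs_le_abs_sub ((u T).1 + (v T).2) (2 * cos (√k * T))
  rw [abs_mul, abs_two] at habs
  linarith

lemma abs_cos_mul_two_pi_lt_one {x : ℝ} (hx : 0 < x) (h : ∀ N : ℕ, 0 < N → 2 * x ≠ N) :
    |cos (x * (2 * π))| < 1 := by
  refine (abs_cos_le_one _).lt_of_ne fun h1 => ?_
  obtain ⟨n, hn⟩ := abs_cos_eq_one_iff.mp h1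
  have hn2 : (n : ℝ) = 2 * x := by
    have := pi_pos
    field_simp at hn
    linarith
  have hn0 : 0 < n := by exact_mod_cast hn2 ▸ (by positivity : (0 : ℝ) < 2 * x)
  exact h n.toNat (by omega) (by rw [hn2.symm]; exact_mod_cast (Int.toNat_of_nonneg hn0.le).symm)

/-- Away from the parametric resonances `2ω = N`, the linearization of the charged
pendulum at `P₁`, the Hill equation `ξ'' + (α + μ/4 + ε cos τ) ξ = 0`, has all its
solutions bounded on `ℝ` for all sufficiently small `|ε|`. -/
theorem hill_nonresonant_stable (μ α : ℝ) (h : α + μ / 4 > 0)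
    (hres : ∀ N : ℕ, 0 < N → 2 * Real.sqrt (α + μ / 4) ≠ (N : ℝ)) :
    ∃ ε₀ > 0, ∀ ε : ℝ, |ε| < ε₀ →
      ∀ ξ : ℝ → ℝ, Differentiable ℝ ξ → Differentiable ℝ (deriv ξ) →
        (∀ τ, deriv (deriv ξ) τ + (α + μ / 4 + ε * Real.cos τ) * ξ τ = 0) →
        ∃ M : ℝ, ∀ τ, |ξ τ| ≤ M := by
  set k := α + μ / 4
  obtain ⟨ε₀, hε₀, htr⟩ := exists_pos_forall_abs_fst_add_snd_lt_two h two_pi_pos.le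
    (abs_cos_mul_two_pi_lt_one (sqrt_pos.mpr h) hres)
  refine ⟨ε₀, hε₀, fun ε hε ξ hξ hξ' hode => ?_⟩
  set q := fun t => k + ε * cos t
  have hqK (t : ℝ) : |q t| ≤ |k| + |ε| :=
    (abs_add_le _ _).trans (add_le_add_right (abs_mul_le_abs_of_abs_le_one (abs_cos_le_one t)) _)
  have hqT : Periodic q (2 * π) := fun t => by simp only [q, cos_add_two_pi]
  have hq : Continuous q := by fun_prop
  obtain ⟨u, hu0, hu⟩ := exists_isIntegralCurve_hillField hq hqK (1, 0)
  obtain ⟨v, hv0, hv⟩ := exists_isIntegralCurve_hillField hq hqK (0, 1)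
  exact (isIntegralCurve_hillField_of_deriv hξ hξ' hode).exists_forall_abs_fst_le_of_hillField
    hqK hqT two_pi_pos hu hv hu0 hv0 (htr ε hε abs_cos_le_one hu hv hu0 hv0)
end
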